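/- arXiv:2603.03886 — 2 statements merged into one kernel-verified Lean document; each statement's English description precedes it below -/
import Mathlib

section
/- Let μ ⊆ λ be Young diagrams and let T = (T⁽¹⁾,…,T⁽ᵏ⁾) ∈ X_μ^λ be splittable, with cell(T) ∈ T⁽ⁱ⁾. Then the tuple (T⁽¹⁾,…,T⁽ⁱ⁻¹⁾, T⁽ⁱ⁾∖{cell(T)}, T', T⁽ⁱ⁺¹⁾,…,T⁽ᵏ⁾), where T' is the single-cell tableau consisting of cell(T) with its entry, is again an element of X_μ^λ; in particular the map Φ is well-defined. -/
/-- The cells of the skew shape `λ/μ`. -/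
def skewCells (μ lam : YoungDiagram) : Finset (ℕ × ℕ) := lam.cells \ μ.cells

/-- The total order on cells induced by a filling `f`: a cell `c = (i,j)` is smaller than
`c' = (i',j')` if `f c < f c'`, or `f c = f c'` and `j < j'`, or
`f c = f c'`, `j = j'` and `i > i'`. -/
def cellLT (f : ℕ × ℕ → ℕ) (c c' : ℕ × ℕ) : Prop :=
  f c < f c' ∨ (f c = f c' ∧ (c.2 < c'.2 ∨ (c.2 = c'.2 ∧ c'.1 < c.1)))

/-- `f` is a semistandard filling on the cell set `s`: entries are positive,
weakly increasing along rows (left to right) and strictly increasing down columns. -/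
def IsSSYTOn (f : ℕ × ℕ → ℕ) (s : Finset (ℕ × ℕ)) : Prop :=
  (∀ c ∈ s, 0 < f c) ∧
  (∀ i j j', j ≤ j' → (i, j) ∈ s → (i, j') ∈ s → f (i, j) ≤ f (i, j')) ∧
  (∀ i i' j, i < i' → (i, j) ∈ s → (i', j) ∈ s → f (i, j) < f (i', j))

/-- An element of `X_μ^λ`: a chain `μ = λ₀ ⊊ λ₁ ⊊ ⋯ ⊊ λ_k = λ` of Young diagrams together
with a filling of `λ/μ` whose restriction to each piece `λᵢ₊₁/λᵢ` is a semistandard Young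
tableau.  (The tuple `(T⁽¹⁾, …, T⁽ᵏ⁾)` is recorded as the single concatenated filling
`entry`, normalized to be `0` outside `λ/μ`; the chain is recorded as a function on `ℕ`
constantly equal to `λ` from index `k` on.) -/
structure XTuple (μ lam : YoungDiagram) where
  k : ℕ
  chain : ℕ → YoungDiagram
  chain_zero : chain 0 = μ
  chain_last : ∀ i, k ≤ i → chain i = lam
  chain_strict : ∀ i < k, (chain i).cells ⊂ (chain (i + 1)).cells
  entry : ℕ × ℕ → ℕ
  entry_eq_zero : ∀ c ∉ skewCells μ lam, entry c = 0
  piece_ssyt : ∀ i < k, IsSSYTOn entry ((chain (i + 1)).cells \ (chain i).cells)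

/-- The cells of the `i`-th piece `T⁽ⁱ⁺¹⁾` (0-indexed: piece `i` has shape `λᵢ₊₁/λᵢ`). -/
def pieceCells {μ lam : YoungDiagram} (T : XTuple μ lam) (i : ℕ) : Finset (ℕ × ℕ) :=
  (T.chain (i + 1)).cells \ (T.chain i).cells

/-- The length `ℓ(T) = k` of an element of `X_μ^λ`. -/
def XTuple.len {μ lam : YoungDiagram} (T : XTuple μ lam) : ℕ := T.k

/-- The cell `c`, lying in piece `i`, is splittable: its piece has more than one cell and
`c` is the largest cell of its piece. -/
def SplittableAt {μ lam : YoungDiagram} (T : XTuple μ lam) (c : ℕ × ℕ) (i : ℕ) : Prop :=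
  i < T.k ∧ c ∈ pieceCells T i ∧ 1 < (pieceCells T i).card ∧
    ∀ c' ∈ pieceCells T i, c' ≠ c → cellLT T.entry c' c

/-- The cell `c` is splittable in `T`. -/
def SplittableCell {μ lam : YoungDiagram} (T : XTuple μ lam) (c : ℕ × ℕ) : Prop :=
  ∃ i, SplittableAt T c i

/-- The cell `c`, lying in piece `i`, is mergeable: it is not in the first piece, its piece
is a single cell, the union of its piece with the previous piece is semistandard, and `c`
is larger than every cell of the previous piece. -/
def MergeableAt {μ lam : YoungDiagram} (T : XTuple μ lam) (c : ℕ × ℕ) (i : ℕ) : Prop :=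
  1 ≤ i ∧ i < T.k ∧ c ∈ pieceCells T i ∧ (pieceCells T i).card = 1 ∧
    IsSSYTOn T.entry (pieceCells T (i - 1) ∪ pieceCells T i) ∧
    ∀ c' ∈ pieceCells T (i - 1), cellLT T.entry c' c

/-- The cell `c` is mergeable in `T`. -/
def MergeableCell {μ lam : YoungDiagram} (T : XTuple μ lam) (c : ℕ × ℕ) : Prop :=
  ∃ i, MergeableAt T c i

/-- `cell(T)`: the largest cell of `T` (in the total order `cellLT T.entry`) among the
splittable or mergeable cells, or `none` (i.e. `∅`) if there is no such cell. -/
noncomputable def cellOf {μ lam : YoungDiagram} (T : XTuple μ lam) : Option (ℕ × ℕ) := by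
  classical
  exact if h : ∃ c, (SplittableCell T c ∨ MergeableCell T c) ∧
      ∀ c', (SplittableCell T c' ∨ MergeableCell T c') → c' ≠ c → cellLT T.entry c' c
    then some h.choose else none

/-- `T` is splittable if `cell(T)` is a splittable cell. -/
def XTuple.Splittable {μ lam : YoungDiagram} (T : XTuple μ lam) : Prop :=
  ∃ c, cellOf T = some c ∧ SplittableCell T c

/-- `T` is mergeable if `cell(T)` is a mergeable cell. -/
def XTuple.Mergeable {μ lam : YoungDiagram} (T : XTuple μ lam) : Prop :=
  ∃ c, cellOf T = some c ∧ MergeableCell T c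

/-- The graph of the map `Φ`:  if `cell(T)` is splittable and lies in piece `i`, the piece
is replaced by the pair `(T⁽ⁱ⁾ ∖ {cell(T)}, {cell(T)})`, i.e. the Young diagram
`λᵢ₊₁ ∖ {cell(T)}` is inserted into the chain; if `cell(T)` is mergeable and lies in piece
`i`, the pieces `i-1` and `i` are merged, i.e. `λᵢ` is deleted from the chain; if
`cell(T) = ∅` then `T` is fixed.  The filling is unchanged in all cases. -/
def PhiRel {μ lam : YoungDiagram} (T T' : XTuple μ lam) : Prop :=
  (∃ c i, cellOf T = some c ∧ SplittableAt T c i ∧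
      T'.k = T.k + 1 ∧ T'.entry = T.entry ∧
      (∀ j, j ≤ i → T'.chain j = T.chain j) ∧
      (T'.chain (i + 1)).cells = (T.chain (i + 1)).cells.erase c ∧
      (∀ j, i + 2 ≤ j → T'.chain j = T.chain (j - 1))) ∨
  (∃ c i, cellOf T = some c ∧ MergeableAt T c i ∧
      T'.k + 1 = T.k ∧ T'.entry = T.entry ∧
      (∀ j, j < i → T'.chain j = T.chain j) ∧
      (∀ j, i ≤ j → T'.chain j = T.chain (j + 1))) ∨
  (cellOf T = none ∧ T' = T)

/-- The map `Φ : X_μ^λ → X_μ^λ`. -/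
noncomputable def Phi {μ lam : YoungDiagram} (T : XTuple μ lam) : XTuple μ lam := by
  classical
  exact if h : ∃ T', PhiRel T T' then h.choose else T

private lemma ssyt_mono {f : ℕ × ℕ → ℕ} {s t : Finset (ℕ × ℕ)} (hts : t ⊆ s)
    (h : IsSSYTOn f s) : IsSSYTOn f t :=
  ⟨fun c hc => h.1 c (hts hc),
   fun i j j' hjj h1 h2 => h.2.1 i j j' hjj (hts h1) (hts h2),
   fun i i' j hii h1 h2 => h.2.2 i i' j hii (hts h1) (hts h2)⟩

/-- If `T ∈ X_μ^λ` is splittable with `cell(T) ∈ T⁽ⁱ⁾`, then the tuple obtained by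
replacing `T⁽ⁱ⁾` with the pair `(T⁽ⁱ⁾ ∖ {cell(T)}, {cell(T)})` is again an element of
`X_μ^λ`; in particular the map `Φ` is well-defined. -/
theorem phi_well_defined (μ lam : YoungDiagram) (hsub : μ ≤ lam) (T : XTuple μ lam)
    (c : ℕ × ℕ) (i : ℕ) (hc : cellOf T = some c) (hs : SplittableAt T c i) :
    ∃ T' : XTuple μ lam,
      T'.k = T.k + 1 ∧ T'.entry = T.entry ∧
      (∀ j, j ≤ i → T'.chain j = T.chain j) ∧
      (T'.chain (i + 1)).cells = (T.chain (i + 1)).cells.erase c ∧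
      (∀ j, i + 2 ≤ j → T'.chain j = T.chain (j - 1)) := by
  obtain ⟨hik, hcp, hcard, hmax⟩ := hs
  set s1 := (T.chain (i + 1)).cells with hs1
  have hpiece := T.piece_ssyt i hik
  have hcs1 : c ∈ s1 := (Finset.mem_sdiff.mp hcp).1
  have hcni : c ∉ (T.chain i).cells := (Finset.mem_sdiff.mp hcp).2
  have hcp' : (c.1, c.2) ∈ (T.chain (i + 1)).cells \ (T.chain i).cells := by
    rw [Prod.mk.eta]; exact hcp
  -- no cell directly right of c
  have hright : (c.1, c.2 + 1) ∉ s1 := by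
    intro hmem
    have hnc : (c.1, c.2 + 1) ∉ (T.chain i).cells := fun hcon =>
      hcni ((T.chain i).isLowerSet (a := ((c.1, c.2 + 1) : ℕ × ℕ)) (b := c)
        (by simp [Prod.le_def]) hcon)
    have hp2 : (c.1, c.2 + 1) ∈ pieceCells T i := Finset.mem_sdiff.mpr ⟨hmem, hnc⟩
    have hne : (c.1, c.2 + 1) ≠ c := fun h => absurd (congrArg Prod.snd h) (by simp)
    have hle : T.entry c ≤ T.entry (c.1, c.2 + 1) := by
      have := hpiece.2.1 c.1 c.2 (c.2 + 1) (Nat.le_succ _) hcp' hp2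
      rwa [Prod.mk.eta] at this
    rcases hmax _ hp2 hne with h | ⟨h1, h2 | ⟨h2, _⟩⟩
    · omega
    · exact absurd h2 (by simp)
    · exact absurd h2 (by simp)
  have hdown : (c.1 + 1, c.2) ∉ s1 := by
    intro hmem
    have hnc : (c.1 + 1, c.2) ∉ (T.chain i).cells := fun hcon =>
      hcni ((T.chain i).isLowerSet (a := ((c.1 + 1, c.2) : ℕ × ℕ)) (b := c)
        (by simp [Prod.le_def]) hcon)
    have hp2 : (c.1 + 1, c.2) ∈ pieceCells T i := Finset.mem_sdiff.mpr ⟨hmem, hnc⟩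
    have hne : (c.1 + 1, c.2) ≠ c := fun h => absurd (congrArg Prod.fst h) (by simp)
    have hlt : T.entry c < T.entry (c.1 + 1, c.2) := by
      have := hpiece.2.2 c.1 (c.1 + 1) c.2 (Nat.lt_succ_self _) hcp' hp2
      rwa [Prod.mk.eta] at this
    rcases hmax _ hp2 hne with h | ⟨h1, _⟩
    · omega
    · omega
  -- the erased diagram is a Young diagram
  have hlower : IsLowerSet ((s1.erase c : Finset (ℕ × ℕ)) : Set (ℕ × ℕ)) := by
    intro b a hab hb
    simp only [Finset.coe_erase, Set.mem_diff, Finset.mem_coe, Set.mem_singleton_iff] at hb ⊢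
    refine ⟨(T.chain (i + 1)).isLowerSet hab hb.1, ?_⟩
    rintro rfl
    have h1 : a.1 ≤ b.1 := hab.1
    have h2 : a.2 ≤ b.2 := hab.2
    have hne : a ≠ b := fun h => hb.2 h.symm
    have hor : a.1 < b.1 ∨ a.2 < b.2 := by
      by_contra hcon
      push_neg at hcon
      exact hne (Prod.ext (le_antisymm h1 hcon.1) (le_antisymm h2 hcon.2))
    rcases hor with h | h
    · exact hdown ((T.chain (i + 1)).isLowerSet
        (a := b) (b := ((a.1 + 1, a.2) : ℕ × ℕ)) ⟨h, h2⟩ hb.1)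
    · exact hright ((T.chain (i + 1)).isLowerSet
        (a := b) (b := ((a.1, a.2 + 1) : ℕ × ℕ)) ⟨h1, h⟩ hb.1)
  set yd : YoungDiagram := ⟨s1.erase c, hlower⟩ with hyd
  set ch : ℕ → YoungDiagram :=
    fun j => if j ≤ i then T.chain j else if j = i + 1 then yd else T.chain (j - 1) with hch
  have hch_le : ∀ j, j ≤ i → ch j = T.chain j := fun j hj => by simp [hch, hj]
  have hch_i1 : ch (i + 1) = yd := by simp [hch]
  have hch_ge : ∀ j, i + 2 ≤ j → ch j = T.chain (j - 1) := fun j hj => by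
    have h1 : ¬ j ≤ i := by omega
    have h2 : j ≠ i + 1 := by omega
    simp [hch, h1, h2]
  have hsubchain : (T.chain i).cells ⊆ s1 := (T.chain_strict i hik).1
  refine ⟨⟨T.k + 1, ch, ?_, ?_, ?_, T.entry, T.entry_eq_zero, ?_⟩, rfl, rfl,
    hch_le, ?_, hch_ge⟩
  · rw [hch_le 0 (Nat.zero_le _)]; exact T.chain_zero
  · intro j hj
    rw [hch_ge j (by omega)]
    exact T.chain_last (j - 1) (by omega)
  · intro j hj
    rcases Nat.lt_or_ge j i with h | h
    · rw [hch_le j (le_of_lt h), hch_le (j + 1) (by omega)]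
      exact T.chain_strict j (by omega)
    rcases Nat.eq_or_lt_of_le h with h0 | h0
    · -- j = i
      subst h0
      rw [hch_le i le_rfl, hch_i1]
      constructor
      · intro x hx
        simp only [hyd, Finset.mem_erase]
        exact ⟨fun h => hcni (h ▸ hx), hsubchain hx⟩
      · intro hcon
        obtain ⟨c', hc'p, hc'ne⟩ := Finset.exists_mem_ne hcard c
        have hc'1 : c' ∈ s1 := (Finset.mem_sdiff.mp hc'p).1
        have hc'2 : c' ∉ (T.chain i).cells := (Finset.mem_sdiff.mp hc'p).2
        exact hc'2 (hcon (by simp [hyd, Finset.mem_erase, hc'ne, hc'1]))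
    rcases Nat.eq_or_lt_of_le h0 with h0' | h0'
    · -- j = i + 1
      have hj' : j = i + 1 := h0'.symm
      subst hj'
      rw [hch_i1, hch_ge (i + 1 + 1) (by omega)]
      simp only [Nat.add_sub_cancel]
      exact Finset.erase_ssubset hcs1
    · -- j ≥ i + 2
      rw [hch_ge j (by omega), hch_ge (j + 1) (by omega)]
      have he : j + 1 - 1 = (j - 1) + 1 := by omega
      rw [he]
      exact T.chain_strict (j - 1) (by omega)
  · intro j hj
    rcases Nat.lt_or_ge j i with h | h
    · rw [hch_le j (le_of_lt h), hch_le (j + 1) (by omega)]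
      exact T.piece_ssyt j (by omega)
    rcases Nat.eq_or_lt_of_le h with h0 | h0
    · subst h0
      rw [hch_le i le_rfl, hch_i1]
      refine ssyt_mono ?_ hpiece
      exact Finset.sdiff_subset_sdiff (Finset.erase_subset _ _) le_rfl
    rcases Nat.eq_or_lt_of_le h0 with h0' | h0'
    · have hj' : j = i + 1 := h0'.symm
      subst hj'
      rw [hch_i1, hch_ge (i + 1 + 1) (by omega)]
      simp only [Nat.add_sub_cancel]
      refine ssyt_mono ?_ hpiece
      intro x hx
      simp only [hyd, Finset.mem_sdiff, Finset.mem_erase, not_and] at hx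
      have hxc : x = c := by
        by_contra hne
        exact (hx.2 hne) hx.1
      rw [hxc]; exact hcp
    · rw [hch_ge j (by omega), hch_ge (j + 1) (by omega)]
      have he : j + 1 - 1 = (j - 1) + 1 := by omega
      rw [he]
      exact T.piece_ssyt (j - 1) (by omega)
  · show (ch (i + 1)).cells = (T.chain (i + 1)).cells.erase c
    rw [hch_i1]
end

section
/- Let μ ⊆ λ be Young diagrams and let T ∈ X_μ^λ be splittable. Then cell(Φ(T)) = cell(T), and cell(T) is a mergeable cell of Φ(T); in particular Φ(T) is mergeable. -/
/-!
Splitting `c = cell(T)` off its piece `T⁽ⁱ⁾` leaves all other pieces in place (up to a shift of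
index) and puts the one-cell piece `{c}` right after `T⁽ⁱ⁾ ∖ {c}`, all of whose cells are smaller
than `c`; so `c` is mergeable in `Φ(T)`. A splittable or mergeable cell `c' ≠ c` of `Φ(T)` either
lies in `T⁽ⁱ⁾ ∖ {c}`, or was already splittable or mergeable in `T`; either way `c' < c`. The only
new configuration is a one-cell piece `{c'}` right after `{c}`: then `c < c'`, so `c'` exceeds all
of `T⁽ⁱ⁾`, and since `c' ∉ λᵢ` the union `T⁽ⁱ⁾ ∪ {c'}` is semistandard, i.e. `c'` was mergeable
in `T`.
-/

section CellOrder

variable {f : ℕ × ℕ → ℕ} {s : Finset (ℕ × ℕ)} {a b c : ℕ × ℕ}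

theorem cellLT_asymm (h : cellLT f a b) : ¬cellLT f b a := by
  unfold cellLT at *; omega

theorem cellLT_trans (hab : cellLT f a b) (hbc : cellLT f b c) : cellLT f a c := by
  unfold cellLT at *; omega

theorem IsSSYTOn.mono {t : Finset (ℕ × ℕ)} (h : IsSSYTOn f t) (hst : s ⊆ t) : IsSSYTOn f s :=
  ⟨fun c hc => h.1 c (hst hc), fun i j j' hj h₁ h₂ => h.2.1 i j j' hj (hst h₁) (hst h₂),
    fun i i' j hi h₁ h₂ => h.2.2 i i' j hi (hst h₁) (hst h₂)⟩

theorem IsSSYTOn.cellLT_right {r j : ℕ} (h : IsSSYTOn f s) (h₁ : (r, j) ∈ s)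
    (h₂ : (r, j + 1) ∈ s) : cellLT f (r, j) (r, j + 1) := by
  have := h.2.1 r j (j + 1) (by omega) h₁ h₂
  unfold cellLT; omega

theorem IsSSYTOn.cellLT_below {r j : ℕ} (h : IsSSYTOn f s) (h₁ : (r, j) ∈ s)
    (h₂ : (r + 1, j) ∈ s) : cellLT f (r, j) (r + 1, j) := by
  have := h.2.2 r (r + 1) j (by omega) h₁ h₂
  unfold cellLT; omega

/-- A cell `c` outside a diagram `D ⊇ s` can only lie to the right of or below cells of `s`, so
it suffices that `c` is larger than all of them. -/
theorem IsSSYTOn.union_singleton (D : YoungDiagram) (h : IsSSYTOn f s) (hsD : s ⊆ D.cells)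
    (hcD : c ∉ D.cells) (hpos : 0 < f c) (hlt : ∀ d ∈ s, cellLT f d c) :
    IsSSYTOn f (s ∪ {c}) := by
  have hnot_le : ∀ d ∈ s, ¬c ≤ d := fun d hd hcd => hcD (D.isLowerSet hcd (hsD hd))
  simp only [IsSSYTOn, Finset.mem_union, Finset.mem_singleton]
  refine ⟨?_, ?_, ?_⟩
  · rintro d (hd | rfl)
    exacts [h.1 d hd, hpos]
  · rintro r j j' hjj' (h₁ | h₁) (h₂ | h₂)
    · exact h.2.1 r j j' hjj' h₁ h₂
    · have := hlt _ h₁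
      subst h₂; unfold cellLT at this; omega
    · exact absurd (h₁ ▸ Prod.mk_le_mk.2 ⟨le_rfl, hjj'⟩) (hnot_le _ h₂)
    · rw [h₁, h₂]
  · rintro r r' j hrr' (h₁ | h₁) (h₂ | h₂)
    · exact h.2.2 r r' j hrr' h₁ h₂
    · have := hlt _ h₁
      subst h₂; unfold cellLT at this; omega
    · exact absurd (h₁ ▸ Prod.mk_le_mk.2 ⟨hrr'.le, le_rfl⟩) (hnot_le _ h₂)
    · rw [← h₂, Prod.mk.injEq] at h₁; omega

/-- Removing the largest cell of a semistandard skew piece `D/D'` from `D` leaves a Young diagram: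
the cell to the right of or below `c` would be larger than `c`. -/
theorem isLowerSet_erase_of_isSSYTOn {D D' : YoungDiagram}
    (h : IsSSYTOn f (D.cells \ D'.cells)) (hc : c ∈ D.cells \ D'.cells)
    (hmax : ∀ d ∈ D.cells \ D'.cells, d ≠ c → cellLT f d c) :
    IsLowerSet ((D.cells.erase c : Finset (ℕ × ℕ)) : Set (ℕ × ℕ)) := by
  intro a b hba ha
  simp only [Finset.coe_erase, Set.mem_sdiff, Finset.mem_coe, Set.mem_singleton_iff] at ha ⊢
  refine ⟨D.isLowerSet hba ha.1, fun hbc => ?_⟩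
  rw [hbc] at hba
  have hpiece : ∀ d, c ≤ d → d ≤ a → d ∈ D.cells \ D'.cells := fun d hcd hda =>
    Finset.mem_sdiff.2
      ⟨D.isLowerSet hda ha.1, fun hd => (Finset.mem_sdiff.1 hc).2 (D'.isLowerSet hcd hd)⟩
  obtain ⟨r, j⟩ := c
  obtain ⟨hra, hja⟩ := hba
  rcases Nat.lt_or_ge r a.1 with hr | hr
  · have hd :=
      hpiece (r + 1, j) (Prod.mk_le_mk.2 ⟨by omega, le_rfl⟩) (Prod.mk_le_mk.2 ⟨hr, hja⟩)
    exact cellLT_asymm (h.cellLT_below hc hd) (hmax _ hd (by simp))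
  · have hj : j < a.2 := by
      by_contra
      exact ha.2 (Prod.ext (by omega) (by omega))
    have hd :=
      hpiece (r, j + 1) (Prod.mk_le_mk.2 ⟨le_rfl, by omega⟩) (Prod.mk_le_mk.2 ⟨hra, hj⟩)
    exact cellLT_asymm (h.cellLT_right hc hd) (hmax _ hd (by simp))

end CellOrder

namespace XTuple

variable {μ lam : YoungDiagram} {T : XTuple μ lam} {c : ℕ × ℕ} {i j : ℕ}

theorem monotone_chain_cells (T : XTuple μ lam) : Monotone fun j => (T.chain j).cells := by
  refine monotone_nat_of_le_succ fun j => ?_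
  by_cases hj : j < T.k
  · exact (T.chain_strict j hj).subset
  · rw [T.chain_last j (by omega), T.chain_last (j + 1) (by omega)]

theorem lt_k_of_mem_pieceCells (h : c ∈ pieceCells T j) : j < T.k := by
  by_contra! hj
  simp [pieceCells, T.chain_last j hj, T.chain_last (j + 1) (by omega)] at h

theorem eq_of_mem_pieceCells (hi : c ∈ pieceCells T i) (hj : c ∈ pieceCells T j) : i = j := by
  have hnot_lt : ∀ {i j}, c ∈ pieceCells T i → c ∈ pieceCells T j → ¬i < j := by
    intro i j hi hj hij
    exact (Finset.mem_sdiff.1 hj).2 (T.monotone_chain_cells hij (Finset.mem_sdiff.1 hi).1)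
  exact le_antisymm (not_lt.1 (hnot_lt hj hi)) (not_lt.1 (hnot_lt hi hj))

end XTuple

theorem cellOf_eq_some_iff {μ lam : YoungDiagram} {T : XTuple μ lam} {c : ℕ × ℕ} :
    cellOf T = some c ↔ (SplittableCell T c ∨ MergeableCell T c) ∧
      ∀ c', (SplittableCell T c' ∨ MergeableCell T c') → c' ≠ c →
        cellLT T.entry c' c := by
  unfold cellOf
  split_ifs with hex
  · refine ⟨fun h => Option.some_injective _ h ▸ hex.choose_spec, fun hc => ?_⟩
    by_contra hne
    replace hne : hex.choose ≠ c := fun h => hne (congrArg some h)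
    exact cellLT_asymm (hc.2 _ hex.choose_spec.1 hne) (hex.choose_spec.2 c hc.1 hne.symm)
  · exact ⟨nofun, fun hc => absurd ⟨c, hc⟩ hex⟩

section Transfer

variable {μ lam : YoungDiagram} {T T' : XTuple μ lam} {c : ℕ × ℕ} {j j' : ℕ}

theorem SplittableAt.of_pieceCells_eq (h : SplittableAt T' c j)
    (hp : pieceCells T' j = pieceCells T j') (he : T'.entry = T.entry) : SplittableAt T c j' := by
  obtain ⟨-, hmem, hcard, hmax⟩ := h
  rw [hp] at hmem hcard hmax
  rw [he] at hmax
  exact ⟨XTuple.lt_k_of_mem_pieceCells hmem, hmem, hcard, hmax⟩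

theorem MergeableAt.of_pieceCells_eq (h : MergeableAt T' c j) (hj' : 1 ≤ j')
    (hp : pieceCells T' j = pieceCells T j') (hp' : pieceCells T' (j - 1) = pieceCells T (j' - 1))
    (he : T'.entry = T.entry) : MergeableAt T c j' := by
  obtain ⟨-, -, hmem, hcard, hssyt, hmax⟩ := h
  rw [hp] at hmem hcard
  rw [hp, hp', he] at hssyt
  rw [hp', he] at hmax
  exact ⟨hj', XTuple.lt_k_of_mem_pieceCells hmem, hmem, hcard, hssyt, hmax⟩

end Transfer

section Split

variable {μ lam : YoungDiagram} {T T' : XTuple μ lam} {c : ℕ × ℕ} {i : ℕ}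

/-- `T'` is `T` with the cell `c` split off piece `i`, as in the first branch of `PhiRel`. -/
structure IsSplit (T T' : XTuple μ lam) (c : ℕ × ℕ) (i : ℕ) : Prop where
  entry_eq : T'.entry = T.entry
  chain_of_le : ∀ j ≤ i, T'.chain j = T.chain j
  cells_chain_succ : (T'.chain (i + 1)).cells = (T.chain (i + 1)).cells.erase c
  chain_of_ge : ∀ j, i + 2 ≤ j → T'.chain j = T.chain (j - 1)

def SplittableAt.eraseDiagram (h : SplittableAt T c i) : YoungDiagram :=
  ⟨(T.chain (i + 1)).cells.erase c,
    isLowerSet_erase_of_isSSYTOn (T.piece_ssyt i h.1) h.2.1 h.2.2.2⟩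

def splitTuple (h : SplittableAt T c i) : XTuple μ lam where
  k := T.k + 1
  chain j := if j ≤ i then T.chain j else if j = i + 1 then h.eraseDiagram else T.chain (j - 1)
  chain_zero := by simp [T.chain_zero]
  chain_last j hj := by
    have := h.1
    rw [if_neg (by omega), if_neg (by omega)]
    exact T.chain_last (j - 1) (by omega)
  chain_strict j hj := by
    have hik := h.1
    have hc := Finset.mem_sdiff.1 h.2.1
    obtain hji | rfl | hji := lt_trichotomy j i
    · rw [if_pos hji.le, if_pos (by omega)]
      exact T.chain_strict j (by omega)
    · rw [if_pos le_rfl, if_neg (by omega), if_pos rfl]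
      have hsub : (T.chain j).cells ⊆ h.eraseDiagram.cells := fun x hx =>
        Finset.mem_erase.2 ⟨fun hxc => hc.2 (hxc ▸ hx), T.monotone_chain_cells j.le_succ hx⟩
      obtain ⟨d, hd, hdc⟩ := Finset.exists_mem_ne h.2.2.1 c
      exact (Finset.ssubset_iff_of_subset hsub).2
        ⟨d, Finset.mem_erase.2 ⟨hdc, (Finset.mem_sdiff.1 hd).1⟩, (Finset.mem_sdiff.1 hd).2⟩
    obtain ⟨j, rfl⟩ : ∃ j', j = j' + 1 := ⟨j - 1, by omega⟩
    obtain rfl | hji := (Nat.le_of_lt_succ hji).eq_or_lt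
    · rw [if_neg (by omega), if_pos rfl, if_neg (by omega), if_neg (by omega)]
      exact Finset.erase_ssubset hc.1
    · rw [if_neg (by omega), if_neg (by omega), if_neg (by omega), if_neg (by omega)]
      exact T.chain_strict j (by omega)
  entry := T.entry
  entry_eq_zero := T.entry_eq_zero
  piece_ssyt j hj := by
    have hik := h.1
    have hc := Finset.mem_sdiff.1 h.2.1
    obtain hji | rfl | hji := lt_trichotomy j i
    · rw [if_pos hji.le, if_pos (by omega)]
      exact T.piece_ssyt j (by omega)
    · rw [if_pos le_rfl, if_neg (by omega), if_pos rfl]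
      exact (T.piece_ssyt j hik).mono
        (Finset.sdiff_subset_sdiff (Finset.erase_subset _ _) le_rfl)
    obtain ⟨j, rfl⟩ : ∃ j', j = j' + 1 := ⟨j - 1, by omega⟩
    obtain rfl | hji := (Nat.le_of_lt_succ hji).eq_or_lt
    · rw [if_neg (by omega), if_pos rfl, if_neg (by omega), if_neg (by omega)]
      refine (T.piece_ssyt _ hik).mono ?_
      rw [Nat.add_sub_cancel, SplittableAt.eraseDiagram, Finset.sdiff_erase_self hc.1]
      exact Finset.singleton_subset_iff.2 h.2.1
    · rw [if_neg (by omega), if_neg (by omega), if_neg (by omega), if_neg (by omega)]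
      exact T.piece_ssyt j (by omega)

theorem isSplit_splitTuple (h : SplittableAt T c i) : IsSplit T (splitTuple h) c i where
  entry_eq := rfl
  chain_of_le j hj := if_pos hj
  cells_chain_succ := by
    show (if i + 1 ≤ i then _ else if i + 1 = i + 1 then h.eraseDiagram else _).cells = _
    rw [if_neg (by omega), if_pos rfl]
    rfl
  chain_of_ge j hj := by
    show (if j ≤ i then _ else if j = i + 1 then _ else _) = _
    rw [if_neg (by omega), if_neg (by omega)]

namespace IsSplit

variable {c' : ℕ × ℕ} {j : ℕ}

theorem pieceCells_of_lt (hT' : IsSplit T T' c i) (hj : j < i) :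
    pieceCells T' j = pieceCells T j := by
  rw [pieceCells, pieceCells, hT'.chain_of_le j hj.le, hT'.chain_of_le (j + 1) hj]

theorem pieceCells_self (hT' : IsSplit T T' c i) :
    pieceCells T' i = (pieceCells T i).erase c := by
  rw [pieceCells, pieceCells, hT'.cells_chain_succ, hT'.chain_of_le i le_rfl,
    Finset.erase_sdiff_comm]

theorem pieceCells_succ (hT' : IsSplit T T' c i) (hc : c ∈ pieceCells T i) :
    pieceCells T' (i + 1) = {c} := by
  rw [pieceCells, hT'.cells_chain_succ, hT'.chain_of_ge (i + 1 + 1) le_rfl, Nat.add_sub_cancel,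
    Finset.sdiff_erase_self (Finset.mem_sdiff.1 hc).1]

theorem pieceCells_succ_of_le (hT' : IsSplit T T' c i) (hj : i + 1 ≤ j) :
    pieceCells T' (j + 1) = pieceCells T j := by
  rw [pieceCells, pieceCells, hT'.chain_of_ge (j + 2) (by omega),
    hT'.chain_of_ge (j + 1) (by omega)]
  rfl

theorem cellLT_of_mem_pieceCells_self (hT' : IsSplit T T' c i) (hsp : SplittableAt T c i)
    (h : c' ∈ pieceCells T' i) : cellLT T.entry c' c := by
  rw [hT'.pieceCells_self] at h
  exact hsp.2.2.2 c' (Finset.mem_of_mem_erase h) (Finset.ne_of_mem_erase h)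

theorem mergeableAt (hT' : IsSplit T T' c i) (hsp : SplittableAt T c i) :
    MergeableAt T' c (i + 1) := by
  have hone := hT'.pieceCells_succ hsp.2.1
  have hmem : c ∈ pieceCells T' (i + 1) := hone ▸ Finset.mem_singleton_self c
  refine ⟨by omega, XTuple.lt_k_of_mem_pieceCells hmem, hmem, by rw [hone, Finset.card_singleton],
    ?_, fun d hd => hT'.entry_eq ▸ hT'.cellLT_of_mem_pieceCells_self hsp hd⟩
  rw [Nat.add_sub_cancel, hone, hT'.pieceCells_self, Finset.union_singleton,
    Finset.insert_erase hsp.2.1, hT'.entry_eq]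
  exact T.piece_ssyt i hsp.1

theorem splittableCell (hT' : IsSplit T T' c i) (hsp : SplittableAt T c i)
    (h : SplittableAt T' c' j) (hj : j ≠ i) : SplittableCell T c' := by
  rcases hj.lt_or_gt with hj | hj
  · exact ⟨j, h.of_pieceCells_eq (hT'.pieceCells_of_lt hj) hT'.entry_eq⟩
  obtain ⟨j, rfl⟩ : ∃ j', j = j' + 1 := ⟨j - 1, by omega⟩
  obtain rfl | hj := (Nat.le_of_lt_succ hj).eq_or_lt
  · have hcard := h.2.2.1
    rw [hT'.pieceCells_succ hsp.2.1, Finset.card_singleton] at hcard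
    omega
  · exact ⟨j, h.of_pieceCells_eq (hT'.pieceCells_succ_of_le hj) hT'.entry_eq⟩

/-- The one new configuration: `c'` follows the one-cell piece `{c}`, so it is larger than `c`
and hence than all of piece `i` of `T`. -/
theorem mergeableAt_of_mergeableAt_add_two (hT' : IsSplit T T' c i) (hsp : SplittableAt T c i)
    (h : MergeableAt T' c' (i + 1 + 1)) : MergeableAt T c' (i + 1) := by
  obtain ⟨-, -, hmem, hcard, -, hgt⟩ := h
  rw [hT'.pieceCells_succ_of_le le_rfl] at hmem hcard
  have hcc' : cellLT T.entry c c' := hT'.entry_eq ▸ hgt c (by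
    rw [Nat.add_sub_cancel, hT'.pieceCells_succ hsp.2.1]
    exact Finset.mem_singleton_self c)
  have hall : ∀ d ∈ pieceCells T i, cellLT T.entry d c' := fun d hd =>
    if hdc : d = c then hdc ▸ hcc' else cellLT_trans (hsp.2.2.2 d hd hdc) hcc'
  have hone : pieceCells T (i + 1) = {c'} := by
    obtain ⟨a, ha⟩ := Finset.card_eq_one.1 hcard
    rw [ha, Finset.mem_singleton] at hmem
    rw [ha, hmem]
  have hik := XTuple.lt_k_of_mem_pieceCells hmem
  refine ⟨le_add_self, hik, hmem, hcard, ?_, hall⟩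
  rw [Nat.add_sub_cancel, hone]
  exact (T.piece_ssyt i hsp.1).union_singleton (T.chain (i + 1)) Finset.sdiff_subset
    (Finset.mem_sdiff.1 hmem).2 ((T.piece_ssyt (i + 1) hik).1 c' hmem) hall

theorem mergeableCell (hT' : IsSplit T T' c i) (hsp : SplittableAt T c i)
    (h : MergeableAt T' c' j) (hj : j ≠ i) (hne : c' ≠ c) : MergeableCell T c' := by
  rcases hj.lt_or_gt with hj | hj
  · exact ⟨j, h.of_pieceCells_eq h.1 (hT'.pieceCells_of_lt hj)
      (hT'.pieceCells_of_lt (by omega)) hT'.entry_eq⟩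
  obtain ⟨j, rfl⟩ : ∃ j', j = j' + 1 := ⟨j - 1, by omega⟩
  obtain rfl | hj := (Nat.le_of_lt_succ hj).eq_or_lt
  · have hmem := h.2.2.1
    rw [hT'.pieceCells_succ hsp.2.1, Finset.mem_singleton] at hmem
    exact absurd hmem hne
  obtain ⟨j, rfl⟩ : ∃ j', j = j' + 1 := ⟨j - 1, by omega⟩
  obtain rfl | hj := (Nat.le_of_lt_succ hj).eq_or_lt
  · exact ⟨i + 1, hT'.mergeableAt_of_mergeableAt_add_two hsp h⟩
  · exact ⟨j + 1, h.of_pieceCells_eq (by omega) (hT'.pieceCells_succ_of_le (by omega))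
      (hT'.pieceCells_succ_of_le hj) hT'.entry_eq⟩

theorem cellOf_eq (hT' : IsSplit T T' c i) (hc : cellOf T = some c)
    (hsp : SplittableAt T c i) : cellOf T' = some c := by
  have hmax := (cellOf_eq_some_iff.1 hc).2
  refine cellOf_eq_some_iff.2 ⟨Or.inr ⟨i + 1, hT'.mergeableAt hsp⟩, ?_⟩
  rw [hT'.entry_eq]
  rintro c' (⟨j, hj⟩ | ⟨j, hj⟩) hne <;> obtain rfl | hji := eq_or_ne j i
  · exact hT'.cellLT_of_mem_pieceCells_self hsp hj.2.1
  · exact hmax c' (Or.inl (hT'.splittableCell hsp hj hji)) hne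
  · exact hT'.cellLT_of_mem_pieceCells_self hsp hj.2.2.1
  · exact hmax c' (Or.inr (hT'.mergeableCell hsp hj hji hne)) hne

end IsSplit

theorem isSplit_phi (hc : cellOf T = some c) (hsp : SplittableAt T c i) :
    IsSplit T (Phi T) c i := by
  have hex : ∃ T', PhiRel T T' :=
    have hs := isSplit_splitTuple hsp
    ⟨splitTuple hsp, Or.inl ⟨c, i, hc, hsp, rfl, hs.1, hs.2, hs.3, hs.4⟩⟩
  have hrel : PhiRel T (Phi T) := by
    unfold Phi
    rw [dif_pos hex]
    exact hex.choose_spec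
  rcases hrel with ⟨c', i', hc', hsp', -, he, hlow, hmid, hhigh⟩ | ⟨c', i', hc', hm, -⟩ |
    ⟨hnone, -⟩
  · obtain rfl : c' = c := Option.some_injective _ (hc'.symm.trans hc)
    obtain rfl := XTuple.eq_of_mem_pieceCells hsp'.2.1 hsp.2.1
    exact ⟨he, hlow, hmid, hhigh⟩
  · obtain rfl : c' = c := Option.some_injective _ (hc'.symm.trans hc)
    obtain rfl := XTuple.eq_of_mem_pieceCells hm.2.2.1 hsp.2.1
    have hcard := hsp.2.2.1
    rw [hm.2.2.2.1] at hcard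
    omega
  · simp [hc] at hnone

end Split

theorem cellOf_phi_of_splittable_general (μ lam : YoungDiagram)
    (T : XTuple μ lam) (c : ℕ × ℕ)
    (hc : cellOf T = some c) (hs : SplittableCell T c) :
    cellOf (Phi T) = some c ∧ MergeableCell (Phi T) c ∧ (Phi T).Mergeable := by
  obtain ⟨i, hsp⟩ := hs
  have hsplit := isSplit_phi hc hsp
  have hcell := hsplit.cellOf_eq hc hsp
  have hmerge := hsplit.mergeableAt hsp
  exact ⟨hcell, ⟨i + 1, hmerge⟩, c, hcell, i + 1, hmerge⟩

/-- If `T ∈ X_μ^λ` is splittable, then `cell(Φ(T)) = cell(T)` and `cell(T)` is a mergeable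
cell of `Φ(T)`; in particular `Φ(T)` is mergeable. -/
theorem cellOf_phi_of_splittable (μ lam : YoungDiagram) (hsub : μ ≤ lam)
    (T : XTuple μ lam) (c : ℕ × ℕ)
    (hc : cellOf T = some c) (hs : SplittableCell T c) :
    cellOf (Phi T) = some c ∧ MergeableCell (Phi T) c ∧ (Phi T).Mergeable :=
  cellOf_phi_of_splittable_general μ lam T c hc hs
end
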